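/- Fix m, n ∈ ℤ and κ ∈ ℝ. If x and y are bounded operators on H with V(t) x V(t)* = e^{i m t} x and V(t) y V(t)* = e^{i n t} y for all t ∈ ℝ, then (x ⊗ 1) · (U_κ (1 ⊗ y) U_κ*) = (x ⊗ y) · (V(nκ) ⊗ 1), and the operator z := (x ⊗ 1) · (U_κ (1 ⊗ y) U_κ*) satisfies (V(s) ⊗ V(t)) z (V(s) ⊗ V(t))* = e^{i (m s + n t)} z for all s, t ∈ ℝ. -/

import Mathlib

noncomputable section

/-- The completed Hilbert space tensor product of two complex Hilbert spaces,
realized abstractly: a Hilbert space `HT` together with a continuous bilinear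
map `tmul` whose elementary tensors have dense span and multiply inner
products, and the induced operator `map a b = a ⊗ b` on `HT`, determined by
`(a ⊗ b)(ξ ⊗ η) = (a ξ) ⊗ (b η)`. -/
structure HilbertTensor (H₁ H₂ HT : Type*)
    [NormedAddCommGroup H₁] [InnerProductSpace ℂ H₁] [CompleteSpace H₁]
    [NormedAddCommGroup H₂] [InnerProductSpace ℂ H₂] [CompleteSpace H₂]
    [NormedAddCommGroup HT] [InnerProductSpace ℂ HT] [CompleteSpace HT] :
    Type _ where
  tmul : H₁ →L[ℂ] H₂ →L[ℂ] HT
  inner_tmul : ∀ (ξ ξ' : H₁) (η η' : H₂),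
    (inner ℂ (tmul ξ η) (tmul ξ' η') : ℂ) = (inner ℂ ξ ξ' : ℂ) * (inner ℂ η η' : ℂ)
  dense_span : Dense (↑(Submodule.span ℂ {z : HT | ∃ ξ η, z = tmul ξ η}) : Set HT)
  map : (H₁ →L[ℂ] H₁) → (H₂ →L[ℂ] H₂) → (HT →L[ℂ] HT)
  map_tmul : ∀ (a : H₁ →L[ℂ] H₁) (b : H₂ →L[ℂ] H₂) (ξ : H₁) (η : H₂),
    map a b (tmul ξ η) = tmul (a ξ) (b η)

/-- The von Neumann algebra generated by a set of operators: its double commutant. -/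
def genVN {M : Type*} [Mul M] (S : Set M) : Set M :=
  Set.centralizer (Set.centralizer S)

/-- `adExp a z = e^{a} z e^{-a}`, i.e. `Ad(e^a)(z)`. -/
def adExp {A : Type*} [NormedRing A] [NormedAlgebra ℂ A] [CompleteSpace A]
    (a z : A) : A :=
  NormedSpace.exp a * z * NormedSpace.exp (-a)

/-!
Everything is checked on elementary tensors `ξ ⊗ η` with `ξ ∈ ran E k`, `η ∈ ran E l`, whose
span is dense. Covariance of `y` means `V(t) y = e^{int} y V(t)`, so `y` shifts spectral degrees
by `n`: `y η ∈ ran E (l + n)`. Hence `U_κ (1 ⊗ y)` and `(1 ⊗ y) U_κ` differ on `ξ ⊗ η` by the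
phase `e^{iκk(l+n)} / e^{iκkl} = e^{iκnk}`, which is the eigenvalue of `V(nκ) ⊗ 1`. The
covariance of `z = (x ⊗ y)(V(nκ) ⊗ 1)` then follows from that of `x` and `y`, because the
`V(t)` commute with each other.
-/

open Complex

namespace HilbertTensor

variable {H₁ H₂ HT : Type*}
  [NormedAddCommGroup H₁] [InnerProductSpace ℂ H₁] [CompleteSpace H₁]
  [NormedAddCommGroup H₂] [InnerProductSpace ℂ H₂] [CompleteSpace H₂]
  [NormedAddCommGroup HT] [InnerProductSpace ℂ HT] [CompleteSpace HT]
  (P : HilbertTensor H₁ H₂ HT)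

theorem ext_tmul {f g : HT →L[ℂ] HT} (h : ∀ ξ η, f (P.tmul ξ η) = g (P.tmul ξ η)) : f = g :=
  ContinuousLinearMap.ext_on P.dense_span <| by
    rintro _ ⟨ξ, η, rfl⟩
    exact h ξ η

theorem eq_zero_of_inner_tmul {u : HT} (h : ∀ ξ η, inner ℂ u (P.tmul ξ η) = 0) : u = 0 :=
  P.dense_span.eq_zero_of_inner_left ℂ fun v hv => by
    induction hv using Submodule.span_induction with
    | mem v hv => obtain ⟨ξ, η, rfl⟩ := hv; exact h ξ η
    | zero => simp
    | add v w _ _ hv hw => simp [inner_add_right, hv, hw]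
    | smul c v _ hv => simp [inner_smul_right, hv]

theorem ext_tmul_of_hasSum {ι κ : Type*} {E : ι → H₁ →L[ℂ] H₁} {F : κ → H₂ →L[ℂ] H₂}
    (hE : ∀ ξ, HasSum (fun k => E k ξ) ξ) (hF : ∀ η, HasSum (fun l => F l η) η)
    {f g : HT →L[ℂ] HT}
    (h : ∀ k l ξ η, f (P.tmul (E k ξ) (F l η)) = g (P.tmul (E k ξ) (F l η))) : f = g := by
  have hsum_left : ∀ ξ η, HasSum (fun k => P.tmul (E k ξ) η) (P.tmul ξ η) := fun ξ η =>
    P.tmul.flip η |>.hasSum (hE ξ)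
  have hsum_right : ∀ ξ η, HasSum (fun l => P.tmul ξ (F l η)) (P.tmul ξ η) := fun ξ η =>
    P.tmul ξ |>.hasSum (hF η)
  have hleft : ∀ k ξ η, f (P.tmul (E k ξ) η) = g (P.tmul (E k ξ) η) := fun k ξ η =>
    (f.hasSum (hsum_right _ η)).unique <| by
      simpa only [h k] using g.hasSum (hsum_right _ η)
  refine P.ext_tmul fun ξ η => (f.hasSum (hsum_left ξ η)).unique ?_
  simpa only [hleft] using g.hasSum (hsum_left ξ η)

theorem map_mul_map (a c : H₁ →L[ℂ] H₁) (b d : H₂ →L[ℂ] H₂) :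
    P.map a b * P.map c d = P.map (a * c) (b * d) :=
  P.ext_tmul fun ξ η => by simp [P.map_tmul]

theorem map_smul_smul (c d : ℂ) (a : H₁ →L[ℂ] H₁) (b : H₂ →L[ℂ] H₂) :
    P.map (c • a) (d • b) = (c * d) • P.map a b :=
  P.ext_tmul fun ξ η => by simp [P.map_tmul, smul_smul, mul_comm]

theorem star_map (a : H₁ →L[ℂ] H₁) (b : H₂ →L[ℂ] H₂) :
    star (P.map a b) = P.map (star a) (star b) :=
  P.ext_tmul fun ξ η => sub_eq_zero.mp <| P.eq_zero_of_inner_tmul fun ξ' η' => by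
    simp only [inner_sub_left, ContinuousLinearMap.star_eq_adjoint,
      ContinuousLinearMap.adjoint_inner_left, P.map_tmul, P.inner_tmul, sub_self]

end HilbertTensor

theorem exists_cexp_ne_cexp {j c : ℤ} (h : j ≠ c) :
    ∃ t : ℝ, cexp (I * j * t) ≠ cexp (I * c * t) := by
  have hjc : (j : ℂ) - c ≠ 0 := sub_ne_zero.mpr (by exact_mod_cast h)
  refine ⟨Real.pi / (j - c), fun heq => ?_⟩
  have hshift :
      I * j * ↑(Real.pi / (j - c) : ℝ) = I * c * ↑(Real.pi / (j - c) : ℝ) + Real.pi * I := by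
    push_cast
    field_simp
    ring
  rw [hshift, exp_add, exp_pi_mul_I] at heq
  exact exp_ne_zero _ (by linear_combination -heq / 2)

section Spectral

variable {H : Type*} [NormedAddCommGroup H] [NormedSpace ℂ H]
  {E : ℤ → H →L[ℂ] H} {V : ℝ → H →L[ℂ] H}

theorem hasSum_cexp_smul_of_eigen (hE_sum : ∀ ξ, HasSum (fun n => E n ξ) ξ)
    (hV_eig : ∀ (t : ℝ) (n : ℤ) (ξ : H), ξ ∈ Set.range (E n) → V t ξ = cexp (I * n * t) • ξ)
    (t : ℝ) (ξ : H) : HasSum (fun k : ℤ => cexp (I * k * t) • E k ξ) (V t ξ) := by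
  simpa only [hV_eig t _ _ (Set.mem_range_self _)] using (V t).hasSum (hE_sum ξ)

theorem mul_eq_add_of_eigen (hE_sum : ∀ ξ, HasSum (fun n => E n ξ) ξ)
    (hV_eig : ∀ (t : ℝ) (n : ℤ) (ξ : H), ξ ∈ Set.range (E n) → V t ξ = cexp (I * n * t) • ξ)
    (a b : ℝ) : V a * V b = V (a + b) := by
  ext ξ
  refine ((V a).hasSum (hasSum_cexp_smul_of_eigen hE_sum hV_eig b ξ)).unique ?_
  convert hasSum_cexp_smul_of_eigen hE_sum hV_eig (a + b) ξ using 2 with k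
  rw [map_smul, hV_eig a k _ (Set.mem_range_self _), smul_smul, ← exp_add]
  push_cast
  ring_nf

theorem commute_of_eigen (hE_sum : ∀ ξ, HasSum (fun n => E n ξ) ξ)
    (hV_eig : ∀ (t : ℝ) (n : ℤ) (ξ : H), ξ ∈ Set.range (E n) → V t ξ = cexp (I * n * t) • ξ)
    (a b : ℝ) : Commute (V a) (V b) := by
  rw [Commute, SemiconjBy, mul_eq_add_of_eigen hE_sum hV_eig, mul_eq_add_of_eigen hE_sum hV_eig,
    add_comm]

theorem commute_proj_of_eigen (hE_idem : ∀ n, IsIdempotentElem (E n))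
    (hE_orth : ∀ m n, m ≠ n → E m * E n = 0) (hE_sum : ∀ ξ, HasSum (fun n => E n ξ) ξ)
    (hV_eig : ∀ (t : ℝ) (n : ℤ) (ξ : H), ξ ∈ Set.range (E n) → V t ξ = cexp (I * n * t) • ξ)
    (j : ℤ) (t : ℝ) : Commute (E j) (V t) := by
  ext ξ
  have hEE : ∀ k, E j (E k ξ) = if k = j then E j ξ else 0 := fun k => by
    split_ifs with hk
    · subst hk
      exact congr($(hE_idem k) ξ)
    · exact congr($(hE_orth j k (Ne.symm hk)) ξ)
  refine ((E j).hasSum (hasSum_cexp_smul_of_eigen hE_sum hV_eig t ξ)).unique ?_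
  rw [mul_apply_eq_comp, hV_eig t j _ (Set.mem_range_self _)]
  simp only [map_smul, hEE, smul_ite, smul_zero]
  convert hasSum_ite_eq j (cexp (I * j * t) • E j ξ) using 2 with k
  split_ifs with hk <;> simp only [hk]

theorem mem_range_of_forall_apply_eq (hE_idem : ∀ n, IsIdempotentElem (E n))
    (hE_orth : ∀ m n, m ≠ n → E m * E n = 0) (hE_sum : ∀ ξ, HasSum (fun n => E n ξ) ξ)
    (hV_eig : ∀ (t : ℝ) (n : ℤ) (ξ : H), ξ ∈ Set.range (E n) → V t ξ = cexp (I * n * t) • ξ)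
    {c : ℤ} {ζ : H} (hζ : ∀ t : ℝ, V t ζ = cexp (I * c * t) • ζ) : ζ ∈ Set.range (E c) := by
  refine ⟨ζ, ((hE_sum ζ).unique (hasSum_single c fun j hj => ?_)).symm⟩
  obtain ⟨t, ht⟩ := exists_cexp_ne_cexp hj
  have hj_eig : V t (E j ζ) = cexp (I * j * t) • E j ζ := hV_eig t j _ (Set.mem_range_self _)
  have hc_eig : V t (E j ζ) = cexp (I * c * t) • E j ζ := by
    rw [← map_smul, ← hζ t]
    exact congr($((commute_proj_of_eigen hE_idem hE_orth hE_sum hV_eig j t).eq) ζ).symm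
  have hzero : (cexp (I * j * t) - cexp (I * c * t)) • E j ζ = 0 := by
    rw [sub_smul, ← hj_eig, ← hc_eig, sub_self]
  exact (smul_eq_zero.mp hzero).resolve_left (sub_ne_zero.mpr ht)

theorem apply_mem_range_add (hE_idem : ∀ n, IsIdempotentElem (E n))
    (hE_orth : ∀ m n, m ≠ n → E m * E n = 0) (hE_sum : ∀ ξ, HasSum (fun n => E n ξ) ξ)
    (hV_eig : ∀ (t : ℝ) (n : ℤ) (ξ : H), ξ ∈ Set.range (E n) → V t ξ = cexp (I * n * t) • ξ)
    {m : ℤ} {x : H →L[ℂ] H} (hx : ∀ t : ℝ, V t * x = cexp (I * m * t) • (x * V t))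
    {k : ℤ} {ξ : H} (hξ : ξ ∈ Set.range (E k)) : x ξ ∈ Set.range (E (k + m)) := by
  refine mem_range_of_forall_apply_eq hE_idem hE_orth hE_sum hV_eig fun t => ?_
  calc V t (x ξ) = cexp (I * m * t) • x (V t ξ) := congr($(hx t) ξ)
    _ = cexp (I * ↑(k + m) * t) • x ξ := by
      rw [hV_eig t k ξ hξ, map_smul, smul_smul, ← exp_add]
      push_cast
      ring_nf

end Spectral

theorem mul_eq_smul_mul_of_conj_eq {R S : Type*} [Monoid R] [StarMul R] [SMul S R]
    [IsScalarTower S R R] {u x : R} (hu : u ∈ unitary R) {c : S}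
    (h : u * x * star u = c • x) : u * x = c • (x * u) := by
  rw [← smul_mul_assoc, ← h, mul_assoc, Unitary.star_mul_self_of_mem hu, mul_one]

theorem stmt14_general
    {H HT : Type*}
    [NormedAddCommGroup H] [InnerProductSpace ℂ H] [CompleteSpace H]
    [NormedAddCommGroup HT] [InnerProductSpace ℂ HT] [CompleteSpace HT]
    (P : HilbertTensor H H HT)
    (E : ℤ → (H →L[ℂ] H))
    (hE_idem : ∀ n, IsIdempotentElem (E n))
    (hE_orth : ∀ m n, m ≠ n → E m * E n = 0)
    (hE_sum : ∀ ξ : H, HasSum (fun n => E n ξ) ξ)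
    (V : ℝ → (H →L[ℂ] H))
    (hV_unitary : ∀ t, V t ∈ unitary (H →L[ℂ] H))
    (hV_eig : ∀ (t : ℝ) (n : ℤ) (ξ : H), ξ ∈ Set.range ⇑(E n) →
      V t ξ = Complex.exp (Complex.I * (n : ℂ) * (t : ℂ)) • ξ)
    (κ : ℝ) (U : HT →L[ℂ] HT)
    (hU_unitary : U ∈ unitary (HT →L[ℂ] HT))
    (hU_eig : ∀ (m n : ℤ) (ξ η : H), ξ ∈ Set.range ⇑(E m) → η ∈ Set.range ⇑(E n) →
      U (P.tmul ξ η) = Complex.exp (Complex.I * (κ : ℂ) * (m : ℂ) * (n : ℂ)) • P.tmul ξ η)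
    (m n : ℤ) (x y : H →L[ℂ] H)
    (hx : ∀ t : ℝ, V t * x * star (V t) =
      Complex.exp (Complex.I * (m : ℂ) * (t : ℂ)) • x)
    (hy : ∀ t : ℝ, V t * y * star (V t) =
      Complex.exp (Complex.I * (n : ℂ) * (t : ℂ)) • y) :
    P.map x 1 * (U * P.map 1 y * star U) = P.map x y * P.map (V ((n : ℝ) * κ)) 1 ∧
    (∀ s t : ℝ,
      P.map (V s) (V t) * (P.map x 1 * (U * P.map 1 y * star U)) *
          star (P.map (V s) (V t))
        = Complex.exp (Complex.I * ((m : ℂ) * (s : ℂ) + (n : ℂ) * (t : ℂ))) •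
            (P.map x 1 * (U * P.map 1 y * star U))) := by
  have hy_shift : ∀ {l : ℤ} {η : H}, η ∈ Set.range (E l) → y η ∈ Set.range (E (l + n)) :=
    apply_mem_range_add hE_idem hE_orth hE_sum hV_eig fun t =>
      mul_eq_smul_mul_of_conj_eq (hV_unitary t) (hy t)
  have hintertwine : P.map x 1 * U * P.map 1 y = P.map x y * P.map (V (n * κ)) 1 * U := by
    refine P.ext_tmul_of_hasSum hE_sum hE_sum fun k l ξ η => ?_
    have hξ : E k ξ ∈ Set.range (E k) := Set.mem_range_self ξ
    have hη : E l η ∈ Set.range (E l) := Set.mem_range_self η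
    simp only [mul_apply_eq_comp, P.map_tmul, one_apply_eq_self, hU_eig k l _ _ hξ hη,
      hU_eig k (l + n) _ _ hξ (hy_shift hη), hV_eig _ k _ hξ, map_smul, smul_apply, smul_smul,
      ← exp_add]
    congr 2
    push_cast
    ring
  have hfactor : P.map x 1 * (U * P.map 1 y * star U) = P.map x y * P.map (V (n * κ)) 1 := by
    rw [← mul_assoc, ← mul_assoc, hintertwine, mul_assoc _ U,
      Unitary.mul_star_self_of_mem hU_unitary, mul_one]
  refine ⟨hfactor, fun s t => ?_⟩
  have hw : V s * V (n * κ) * star (V s) = V (n * κ) :=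
    (commute_unitary_iff_star_right_conjugate (hV_unitary s)).mp
      (commute_of_eigen hE_sum hV_eig _ _)
  have hxw : V s * (x * V (n * κ)) * star (V s) = cexp (I * m * s) • (x * V (n * κ)) := by
    simpa [hx, hw, smul_mul_assoc] using
      map_mul (Unitary.conjStarAlgAut ℂ _ ⟨V s, hV_unitary s⟩) x (V (n * κ))
  rw [hfactor, P.star_map, P.map_mul_map, P.map_mul_map, P.map_mul_map, mul_one, hxw, hy,
    P.map_smul_smul, ← exp_add]
  ring_nf

/-- for covariant `x, y` (of degrees `m, n`) one has
`(x ⊗ 1)·(U_κ (1 ⊗ y) U_κ*) = (x ⊗ y)·(V(nκ) ⊗ 1)`, and this operator `z`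
satisfies `(V(s) ⊗ V(t)) z (V(s) ⊗ V(t))* = e^{i(ms+nt)} z`. -/
theorem stmt14
    {H HT : Type*}
    [NormedAddCommGroup H] [InnerProductSpace ℂ H] [CompleteSpace H]
    [NormedAddCommGroup HT] [InnerProductSpace ℂ HT] [CompleteSpace HT]
    (P : HilbertTensor H H HT)
    (E : ℤ → (H →L[ℂ] H))
    (hE_idem : ∀ n, IsIdempotentElem (E n))
    (hE_sa : ∀ n, IsSelfAdjoint (E n))
    (hE_orth : ∀ m n, m ≠ n → E m * E n = 0)
    (hE_sum : ∀ ξ : H, HasSum (fun n => E n ξ) ξ)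
    (V : ℝ → (H →L[ℂ] H))
    (hV_unitary : ∀ t, V t ∈ unitary (H →L[ℂ] H))
    (hV_eig : ∀ (t : ℝ) (n : ℤ) (ξ : H), ξ ∈ Set.range ⇑(E n) →
      V t ξ = Complex.exp (Complex.I * (n : ℂ) * (t : ℂ)) • ξ)
    (κ : ℝ) (U : HT →L[ℂ] HT)
    (hU_unitary : U ∈ unitary (HT →L[ℂ] HT))
    (hU_eig : ∀ (m n : ℤ) (ξ η : H), ξ ∈ Set.range ⇑(E m) → η ∈ Set.range ⇑(E n) →
      U (P.tmul ξ η) = Complex.exp (Complex.I * (κ : ℂ) * (m : ℂ) * (n : ℂ)) • P.tmul ξ η)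
    (m n : ℤ) (x y : H →L[ℂ] H)
    (hx : ∀ t : ℝ, V t * x * star (V t) =
      Complex.exp (Complex.I * (m : ℂ) * (t : ℂ)) • x)
    (hy : ∀ t : ℝ, V t * y * star (V t) =
      Complex.exp (Complex.I * (n : ℂ) * (t : ℂ)) • y) :
    P.map x 1 * (U * P.map 1 y * star U) = P.map x y * P.map (V ((n : ℝ) * κ)) 1 ∧
    (∀ s t : ℝ,
      P.map (V s) (V t) * (P.map x 1 * (U * P.map 1 y * star U)) *
          star (P.map (V s) (V t))
        = Complex.exp (Complex.I * ((m : ℂ) * (s : ℂ) + (n : ℂ) * (t : ℂ))) •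
            (P.map x 1 * (U * P.map 1 y * star U))) :=
  stmt14_general P E hE_idem hE_orth hE_sum V hV_unitary hV_eig κ U hU_unitary hU_eig m n x y hx hy
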